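/- arXiv:1611.07886 — 4 statements merged into one kernel-verified Lean document; each statement's English description precedes it below -/
import Mathlib

section
/- Let C be a topos. Let Y be an object, let s : S' ↣ S and t : T' ↣ T be monomorphisms, and let y_{S'} : Y → S', y_{T'} : Y → T', y_S : Y → S, y_T : Y → T be morphisms with s ∘ y_{S'} = y_S and t ∘ y_{T'} = y_T. Then the canonical morphism S' +_Y T' → S +_Y T between the pushouts, induced by s and t via the universal property of the pushout, is a monomorphism. -/
open CategoryTheory CategoryTheory.Limits

universe v u

/-- A category (with a terminal object) has a subobject classifier if there is a morphism
`truth : ⊤_ C ⟶ Ω` such that every monomorphism is a pullback of `truth` along a unique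
characteristic morphism. -/
class HasSubobjectClassifier (C : Type u) [Category.{v} C] [HasTerminal C] : Prop where
  exists_classifier : ∃ (Ω : C) (truth : ⊤_ C ⟶ Ω), ∀ {U X : C} (m : U ⟶ X), Mono m →
    ∃! χ : X ⟶ Ω, IsPullback m (terminal.from U) χ truth

/-- A topos is a category with finite limits that is cartesian closed and has a
subobject classifier. -/
class IsTopos (C : Type u) [Category.{v} C] extends HasFiniteLimits C : Prop where
  cartesianClosed : ∀ X : C, (prod.functor.obj X).IsLeftAdjoint
  hasSubobjectClassifier : _root_.HasSubobjectClassifier C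

/-!
In a topos, `Ω` is injective with respect to monomorphisms (classify `u ≫ m`, where `u` is the
pullback of `truth` along the map to be extended), hence so is `Ω^C`, because `C × -` preserves
monomorphisms. The transpose `{·} : C ⟶ Ω^C` of the characteristic map of the diagonal of `C` is
a monomorphism. So if `i : C ⟶ P` is a pushout of a monomorphism `m : A ⟶ B`, then `f ≫ {·}`
extends along `m`, giving `P ⟶ Ω^C` whose restriction along `i` is the mono `{·}`; thus `i` is
a monomorphism. The comparison map of the theorem is the composite of a pushout of `s` and a
pushout of `t`.
-/

namespace CategoryTheory

variable {𝒞 : Type u} [Category.{v} 𝒞]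

namespace Limits

lemma pushout.isPushout_map_inl {Y S' S T : 𝒞} (f : Y ⟶ S') (g : Y ⟶ T) (s : S' ⟶ S)
    [HasPushout f g] [HasPushout (f ≫ s) g] :
    IsPushout s (pushout.inl f g) (pushout.inl (f ≫ s) g)
      (pushout.map f g (f ≫ s) g s (𝟙 T) (𝟙 Y) (by simp) (by simp)) := by
  convert (IsPushout.of_hasPushout (f ≫ s) g).of_left' (IsPushout.of_hasPushout f g)
  apply pushout.hom_ext
  · exact (pushout.inl_desc _ _ _).trans (by simp)
  · exact (pushout.inr_desc _ _ _).trans (by simp)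

lemma pushout.isPushout_map_inr {Y S T' T : 𝒞} (f : Y ⟶ S) (g : Y ⟶ T') (t : T' ⟶ T)
    [HasPushout f g] [HasPushout f (g ≫ t)] :
    IsPushout t (pushout.inr f g) (pushout.inr f (g ≫ t))
      (pushout.map f g f (g ≫ t) (𝟙 S) t (𝟙 Y) (by simp) (by simp)) := by
  convert (IsPushout.of_hasPushout f (g ≫ t)).flip.of_left' (IsPushout.of_hasPushout f g).flip
  apply pushout.hom_ext
  · exact (pushout.inl_desc _ _ _).trans (by simp)
  · exact (pushout.inr_desc _ _ _).trans (by simp)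

end Limits

section Classifier

variable [HasTerminal 𝒞] {Ω : 𝒞}

def IsSubobjectClassifier (truth : ⊤_ 𝒞 ⟶ Ω) : Prop :=
  ∀ {U X : 𝒞} (m : U ⟶ X), Mono m → ∃! χ : X ⟶ Ω, IsPullback m (terminal.from U) χ truth

lemma IsSubobjectClassifier.exists_comp_eq [HasPullbacks 𝒞] {truth : ⊤_ 𝒞 ⟶ Ω}
    (hΩ : IsSubobjectClassifier truth) {A B : 𝒞} (m : A ⟶ B) [Mono m] (g : A ⟶ Ω) :
    ∃ k : B ⟶ Ω, m ≫ k = g := by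
  have : Mono truth := terminalIsTerminal.mono_from truth
  set u := pullback.fst g truth
  have hg : IsPullback u (terminal.from _) g truth := by
    convert IsPullback.of_hasPullback g truth
    exact Subsingleton.elim _ _
  obtain ⟨χ, hχ, -⟩ := hΩ (u ≫ m) inferInstance
  have hmχ : IsPullback u (terminal.from _) (m ≫ χ) truth := by
    simpa using (IsPullback.of_vert_isIso_mono (snd := 𝟙 _) (f := m) ⟨by simp⟩).paste_vert hχ
  obtain ⟨_, -, huniq⟩ := hΩ u inferInstance
  exact ⟨χ, (huniq _ hmχ).trans (huniq g hg).symm⟩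

lemma eq_of_prod_map_comp_eq {truth : ⊤_ 𝒞 ⟶ Ω} [HasBinaryProducts 𝒞] {C X : 𝒞} {χ : C ⨯ C ⟶ Ω}
    (hχ : IsPullback (diag C) (terminal.from C) χ truth) {a b : X ⟶ C}
    (hab : prod.map (𝟙 C) a ≫ χ = prod.map (𝟙 C) b ≫ χ) : a = b := by
  have hlift : prod.lift a b ≫ χ = terminal.from X ≫ truth :=
    calc prod.lift a b ≫ χ = prod.lift a (𝟙 X) ≫ prod.map (𝟙 C) b ≫ χ := by simp
      _ = prod.lift a (𝟙 X) ≫ prod.map (𝟙 C) a ≫ χ := by rw [hab]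
      _ = a ≫ diag C ≫ χ := by rw [← Category.assoc a, prod.comp_diag]; simp
      _ = terminal.from X ≫ truth := by rw [hχ.w, ← Category.assoc, terminal.comp_from]
  obtain ⟨l, hl, -⟩ := hχ.exists_lift _ _ hlift
  have hla := hl =≫ prod.fst
  have hlb := hl =≫ prod.snd
  simp only [Category.assoc, diag, prod.lift_fst, prod.lift_snd, Category.comp_id] at hla hlb
  exact hla.symm.trans hlb

lemma IsSubobjectClassifier.exists_comp_eq_of_adjunction [HasPullbacks 𝒞] [HasBinaryProducts 𝒞]
    {truth : ⊤_ 𝒞 ⟶ Ω} (hΩ : IsSubobjectClassifier truth) {C : 𝒞} {R : 𝒞 ⥤ 𝒞}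
    (adj : prod.functor.obj C ⊣ R) {A B : 𝒞} (m : A ⟶ B) [Mono m] (g : A ⟶ R.obj Ω) :
    ∃ k : B ⟶ R.obj Ω, m ≫ k = g := by
  obtain ⟨k, hk⟩ := hΩ.exists_comp_eq (prod.map (𝟙 C) m) ((adj.homEquiv A Ω).symm g)
  refine ⟨adj.homEquiv B Ω k, ?_⟩
  rw [← (adj.homEquiv A Ω).apply_symm_apply g, ← hk]
  exact (adj.homEquiv_naturality_left m k).symm

lemma mono_homEquiv_of_isPullback_diag [HasBinaryProducts 𝒞] {truth : ⊤_ 𝒞 ⟶ Ω} {C : 𝒞}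
    {R : 𝒞 ⥤ 𝒞} (adj : prod.functor.obj C ⊣ R) {χ : C ⨯ C ⟶ Ω}
    (hχ : IsPullback (diag C) (terminal.from C) χ truth) :
    Mono (adj.homEquiv C Ω χ) := by
  refine ⟨fun a b hab => eq_of_prod_map_comp_eq hχ ?_⟩
  apply (adj.homEquiv _ Ω).injective
  exact (adj.homEquiv_naturality_left a χ).trans
    (hab.trans (adj.homEquiv_naturality_left b χ).symm)

end Classifier

lemma IsTopos.mono_of_isPushout_of_mono_left [IsTopos 𝒞] {A B C P : 𝒞} {m : A ⟶ B} {f : A ⟶ C}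
    {h : B ⟶ P} {i : C ⟶ P} (sq : IsPushout m f h i) [Mono m] : Mono i := by
  obtain ⟨Ω, truth, hΩ⟩ := (IsTopos.hasSubobjectClassifier (C := 𝒞)).exists_classifier
  replace hΩ : IsSubobjectClassifier truth := hΩ
  obtain ⟨R, ⟨adj⟩⟩ := (IsTopos.cartesianClosed C).exists_rightAdjoint
  obtain ⟨χ, hχ, -⟩ := hΩ (diag C) inferInstance
  have := mono_homEquiv_of_isPullback_diag adj hχ
  obtain ⟨k, hk⟩ := hΩ.exists_comp_eq_of_adjunction adj m (f ≫ adj.homEquiv C Ω χ)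
  exact mono_of_mono_fac (sq.inr_desc k _ hk)

end CategoryTheory

/-- In a topos, given monomorphisms `s : S' ↣ S`, `t : T' ↣ T` and
morphisms from `Y` with `s ∘ y_{S'} = y_S` and `t ∘ y_{T'} = y_T`, the canonical morphism
`S' +_Y T' ⟶ S +_Y T` between the pushouts induced by `s` and `t` is a monomorphism. -/
theorem stmt1 {𝒞 : Type u} [Category.{v} 𝒞] [IsTopos 𝒞] [HasFiniteColimits 𝒞]
    {Y S S' T T' : 𝒞} (s : S' ⟶ S) (t : T' ⟶ T) [Mono s] [Mono t]
    (yS' : Y ⟶ S') (yT' : Y ⟶ T') (yS : Y ⟶ S) (yT : Y ⟶ T)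
    (hs : yS' ≫ s = yS) (ht : yT' ≫ t = yT) :
    Mono (pushout.map yS' yT' yS yT s t (𝟙 Y)
      (by rw [hs, Category.id_comp]) (by rw [ht, Category.id_comp])) := by
  subst hs ht
  have := IsTopos.mono_of_isPushout_of_mono_left (pushout.isPushout_map_inl yS' yT' s)
  have := IsTopos.mono_of_isPushout_of_mono_left (pushout.isPushout_map_inr (yS' ≫ s) yT' t)
  convert mono_comp (pushout.map yS' yT' (yS' ≫ s) yT' s (𝟙 T') (𝟙 Y) _ _)
    (pushout.map (yS' ≫ s) yT' (yS' ≫ s) (yT' ≫ t) (𝟙 S) t (𝟙 Y) _ _) using 1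
  rw [pushout.map_comp]
  simp
end

section
/- Let C be a topos. Fix an object Y, monomorphisms s' : S' ↣ S, s'' : S'' ↣ S, t' : T' ↣ T, t'' : T'' ↣ T, and morphisms y_{S'} : Y → S', y_{S''} : Y → S'', y_{T'} : Y → T', y_{T''} : Y → T'' satisfying s' ∘ y_{S'} = s'' ∘ y_{S''} and t' ∘ y_{T'} = t'' ∘ y_{T''}. Write y_S := s' ∘ y_{S'} and y_T := t' ∘ y_{T'}. Form A_Y := (S' ×_S S'') +_Y (T' ×_T T'') using the induced morphisms from Y into the two pullbacks, the pushouts S' +_Y T', S'' +_Y T'', S +_Y T, and the pullback B_Y := (S' +_Y T') ×_{S +_Y T} (S'' +_Y T'') along the canonical morphisms S' +_Y T' → S +_Y T and S'' +_Y T'' → S +_Y T. Then the canonical morphism θ_Y : A_Y → B_Y, induced by the universal properties of the pushout A_Y and the pullback B_Y, is a monomorphism. -/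
open CategoryTheory CategoryTheory.Limits

universe v u

/-! In a topos, a span `Z ← Y ↣ T` with monic right leg completes to a commutative square whose
edge out of `Z` is the singleton map `Z ↣ Ω^Z`. For the pushout `P` of `Z ← Y → T` and a mono
`T ↣ T'`, applying this to `P ← T ↣ T'` factors the singleton map of `P` through the comparison
map from `P` to the pushout of `Z ← Y → T'`, which is therefore monic. Hence the map
`A_Y → S +_Y T` induced by the monos `S' ×_S S'' ↣ S` and `T' ×_T T'' ↣ T` is monic, and it
factors through `θ_Y`. -/

attribute [local simp] prod.lift_fst prod.lift_snd prod.lift_fst_assoc prod.lift_snd_assoc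
  pullback.lift_fst pullback.lift_snd pullback.lift_fst_assoc pullback.lift_snd_assoc
  pushout.inl_desc pushout.inr_desc pushout.inl_desc_assoc pushout.inr_desc_assoc

namespace CategoryTheory.Limits

variable {𝒞 : Type u} [Category.{v} 𝒞] [HasBinaryProducts 𝒞]

lemma isPullback_graph_diag {Y Z : 𝒞} (k : Y ⟶ Z) :
    IsPullback (prod.lift k (𝟙 Y)) k (prod.map (𝟙 Z) k) (diag Z) := by
  refine IsPullback.of_isLimit' ⟨by ext <;> simp⟩
    (PullbackCone.IsLimit.mk _ (fun s => s.fst ≫ prod.snd) (fun s => ?_)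
      (fun s => by simpa using s.condition =≫ prod.snd)
      (fun s l hl _ => by simpa using hl =≫ prod.snd))
  have h₁ : s.fst ≫ prod.fst = s.snd := by simpa using s.condition =≫ prod.fst
  have h₂ : s.fst ≫ prod.snd ≫ k = s.snd := by simpa using s.condition =≫ prod.snd
  ext <;> simp [h₁, h₂]

lemma isPullback_graph_of_mono {Y Z T : 𝒞} (k : Y ⟶ Z) (m : Y ⟶ T) [Mono m] :
    IsPullback (prod.lift k (𝟙 Y)) (𝟙 Y) (prod.map (𝟙 Z) m) (prod.lift k m) := by
  refine IsPullback.of_isLimit' ⟨by ext <;> simp⟩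
    (PullbackCone.IsLimit.mk _ (fun s => s.snd) (fun s => ?_) (fun s => by simp)
      (fun s l _ hl => by simpa using hl))
  have h₁ : s.fst ≫ prod.fst = s.snd ≫ k := by simpa using s.condition =≫ prod.fst
  have h₂ : (s.fst ≫ prod.snd) ≫ m = s.snd ≫ m := by simpa using s.condition =≫ prod.snd
  ext
  · simp [h₁]
  · simpa using ((cancel_mono m).1 h₂).symm

lemma eq_of_graph_factors {V Z : 𝒞} {a b : V ⟶ Z} {i : V ⟶ V}
    (h : i ≫ prod.lift b (𝟙 V) = prod.lift a (𝟙 V)) : a = b := by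
  have hi : i = 𝟙 V := by simpa using h =≫ prod.snd
  simpa [hi] using (h =≫ prod.fst).symm

end CategoryTheory.Limits

namespace IsTopos

variable {𝒞 : Type u} [Category.{v} 𝒞] [IsTopos 𝒞]

/- `W = Ω^Z`, `η` is the singleton map (transpose of the characteristic map of the diagonal) and
`φ` the transpose of the characteristic map of `⟨k, m⟩ : Y ↣ Z ⨯ T`: both composites with `k`
and `m` classify the graph of `k`. -/
theorem exists_mono_comp_eq_comp {Y Z T : 𝒞} (m : Y ⟶ T) [Mono m]
    (k : Y ⟶ Z) : ∃ (W : 𝒞) (η : Z ⟶ W) (φ : T ⟶ W), Mono η ∧ k ≫ η = m ≫ φ := by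
  obtain ⟨Ω, tr, hcls⟩ := (IsTopos.hasSubobjectClassifier (C := 𝒞)).exists_classifier
  obtain ⟨P, ⟨adj⟩⟩ := (IsTopos.cartesianClosed Z).exists_rightAdjoint
  obtain ⟨σ, hσ, -⟩ := hcls (diag Z) inferInstance
  obtain ⟨ρ, hρ, -⟩ := hcls (prod.lift k m) (mono_of_mono_fac (prod.lift_snd k m))
  have graph_σ {V : 𝒞} (a : V ⟶ Z) :
      IsPullback (prod.lift a (𝟙 V)) (terminal.from V) (prod.map (𝟙 Z) a ≫ σ) tr := by
    simpa using (isPullback_graph_diag a).paste_vert hσ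
  have graph_ρ : IsPullback (prod.lift k (𝟙 Y)) (terminal.from Y) (prod.map (𝟙 Z) m ≫ ρ) tr := by
    simpa using (isPullback_graph_of_mono k m).paste_vert hρ
  have hσρ : prod.map (𝟙 Z) k ≫ σ = prod.map (𝟙 Z) m ≫ ρ :=
    (hcls _ (mono_of_mono_fac (prod.lift_snd k (𝟙 Y)))).unique (graph_σ k) graph_ρ
  refine ⟨P.obj Ω, adj.homEquiv _ _ σ, adj.homEquiv _ _ ρ, ⟨fun {V} a b hab => ?_⟩, ?_⟩
  · have hσab : prod.map (𝟙 Z) a ≫ σ = prod.map (𝟙 Z) b ≫ σ := (adj.homEquiv _ _).injective <|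
      (adj.homEquiv_naturality_left a σ).trans <| hab.trans (adj.homEquiv_naturality_left b σ).symm
    exact eq_of_graph_factors ((graph_σ b).lift_fst _ _ (by rw [← hσab]; exact (graph_σ a).w))
  · exact (adj.homEquiv_naturality_left k σ).symm.trans <|
      (congrArg _ hσρ).trans (adj.homEquiv_naturality_left m ρ)

variable [HasPushouts 𝒞]

theorem mono_pushout_map_of_mono_right {Y Z T T' : 𝒞} (f : Y ⟶ Z) (g : Y ⟶ T)
    (m : T ⟶ T') [Mono m] :
    Mono (pushout.map f g f (g ≫ m) (𝟙 Z) m (𝟙 Y) (by simp) (by simp)) := by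
  obtain ⟨W, η, φ, hη, hηφ⟩ := exists_mono_comp_eq_comp m (pushout.inr f g)
  refine mono_of_mono_fac (f := pushout.desc (pushout.inl f g ≫ η) φ ?_) (h := η) ?_
  · rw [pushout.condition_assoc, hηφ, Category.assoc]
  · ext <;> simp [hηφ]

theorem mono_pushout_map_of_mono_left {Y Z Z' T : 𝒞} (f : Y ⟶ Z) (g : Y ⟶ T)
    (n : Z ⟶ Z') [Mono n] :
    Mono (pushout.map f g (f ≫ n) g n (𝟙 T) (𝟙 Y) (by simp) (by simp)) := by
  have := mono_pushout_map_of_mono_right g f n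
  have hsymm : pushout.map f g (f ≫ n) g n (𝟙 T) (𝟙 Y) (by simp) (by simp) =
      (pushoutSymmetry f g).hom ≫ pushout.map g f g (f ≫ n) (𝟙 T) n (𝟙 Y) (by simp) (by simp) ≫
        (pushoutSymmetry g (f ≫ n)).hom := by
    ext <;> simp
  rw [hsymm]
  infer_instance

theorem mono_pushout_map {Y Z Z' T T' : 𝒞} {f : Y ⟶ Z} {g : Y ⟶ T} {f' : Y ⟶ Z'}
    {g' : Y ⟶ T'} (n : Z ⟶ Z') (m : T ⟶ T') [Mono n] [Mono m] (hf : f ≫ n = 𝟙 Y ≫ f')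
    (hg : g ≫ m = 𝟙 Y ≫ g') : Mono (pushout.map f g f' g' n m (𝟙 Y) hf hg) := by
  obtain rfl : f' = f ≫ n := by simpa using hf.symm
  obtain rfl : g' = g ≫ m := by simpa using hg.symm
  have := mono_pushout_map_of_mono_right f g m
  have := mono_pushout_map_of_mono_left f (g ≫ m) n
  have hcomp : pushout.map f g (f ≫ n) (g ≫ m) n m (𝟙 Y) hf hg =
      pushout.map f g f (g ≫ m) (𝟙 Z) m (𝟙 Y) (by simp) (by simp) ≫
        pushout.map f (g ≫ m) (f ≫ n) (g ≫ m) n (𝟙 T') (𝟙 Y) (by simp) (by simp) := by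
    ext <;> simp
  rw [hcomp]
  infer_instance

end IsTopos

/-- In a topos, with monomorphisms `s' : S' ↣ S`, `s'' : S'' ↣ S`,
`t' : T' ↣ T`, `t'' : T'' ↣ T` and compatible morphisms from `Y`, the canonical morphism
`θ_Y : (S' ×_S S'') +_Y (T' ×_T T'') ⟶ (S' +_Y T') ×_{S +_Y T} (S'' +_Y T'')`,
induced by the universal properties of the pushout `A_Y` and the pullback `B_Y`,
is a monomorphism. -/
theorem stmt7 {𝒞 : Type u} [Category.{v} 𝒞] [IsTopos 𝒞] [HasFiniteColimits 𝒞]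
    {Y S S' S'' T T' T'' : 𝒞}
    (s' : S' ⟶ S) (s'' : S'' ⟶ S) (t' : T' ⟶ T) (t'' : T'' ⟶ T)
    [Mono s'] [Mono s''] [Mono t'] [Mono t'']
    (yS' : Y ⟶ S') (yS'' : Y ⟶ S'') (yT' : Y ⟶ T') (yT'' : Y ⟶ T'')
    (hS : yS' ≫ s' = yS'' ≫ s'') (hT : yT' ≫ t' = yT'' ≫ t'') :
    Mono (
    pushout.desc
      (f := pullback.lift yS' yS'' hS) (g := pullback.lift yT' yT'' hT)
      -- the map `S' ×_S S'' ⟶ B_Y` induced by the universal property of the pullback `B_Y`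
      (pullback.lift
        (f := pushout.map yS' yT' (yS' ≫ s') (yT' ≫ t') s' t' (𝟙 Y)
          (Category.id_comp _).symm (Category.id_comp _).symm)
        (g := pushout.map yS'' yT'' (yS' ≫ s') (yT' ≫ t') s'' t'' (𝟙 Y)
          (by rw [Category.id_comp]; exact hS.symm) (by rw [Category.id_comp]; exact hT.symm))
        (pullback.fst s' s'' ≫ pushout.inl yS' yT')
        (pullback.snd s' s'' ≫ pushout.inl yS'' yT'')
        (by simp only [Category.assoc]; erw [pushout.inl_desc, pushout.inl_desc]; exact pullback.condition_assoc _))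
      -- the map `T' ×_T T'' ⟶ B_Y` induced by the universal property of the pullback `B_Y`
      (pullback.lift
        (f := pushout.map yS' yT' (yS' ≫ s') (yT' ≫ t') s' t' (𝟙 Y)
          (Category.id_comp _).symm (Category.id_comp _).symm)
        (g := pushout.map yS'' yT'' (yS' ≫ s') (yT' ≫ t') s'' t'' (𝟙 Y)
          (by rw [Category.id_comp]; exact hS.symm) (by rw [Category.id_comp]; exact hT.symm))
        (pullback.fst t' t'' ≫ pushout.inr yS' yT')
        (pullback.snd t' t'' ≫ pushout.inr yS'' yT'')
        (by simp only [Category.assoc]; erw [pushout.inr_desc, pushout.inr_desc]; exact pullback.condition_assoc _))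
      -- compatibility, giving the map out of the pushout `A_Y`
      (by apply pullback.hom_ext <;> simp only [Category.assoc] <;> first | (erw [pullback.lift_fst, pullback.lift_fst, pullback.lift_fst_assoc, pullback.lift_fst_assoc]; exact pushout.condition) | (erw [pullback.lift_snd, pullback.lift_snd, pullback.lift_snd_assoc, pullback.lift_snd_assoc]; exact pushout.condition))
    ) := by
  have hA := IsTopos.mono_pushout_map (f := pullback.lift yS' yS'' hS)
    (g := pullback.lift yT' yT'' hT) (f' := yS' ≫ s') (g' := yT' ≫ t')
    (pullback.fst s' s'' ≫ s') (pullback.fst t' t'' ≫ t') (by simp) (by simp)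
  exact @mono_of_mono_fac _ _ _ _ _ (pullback.fst _ _ ≫ pushout.map yS' yT' (yS' ≫ s')
    (yT' ≫ t') s' t' (𝟙 Y) (Category.id_comp _).symm (Category.id_comp _).symm) _ _ hA
    (by ext <;> simp)
end

section
/- Let C be a topos and let X, Y, Z be objects. Let L, S, L' be cospans from X to Y and let R, T, R' be cospans from Y to Z. Let S' be a span of cospans from L to S, S'' a span of cospans from S to L', T' a span of cospans from R to T, and T'' a span of cospans from T to R', all of whose span legs are monomorphisms. Form the vertical composites S' ×_S S'' and T' ×_T T'' (pullbacks over the monic legs into S and T), and the horizontal composites via pushout over Y. Then the canonical morphism θ_Y : (S' ×_S S'') +_Y (T' ×_T T'') → (S' +_Y T') ×_{S +_Y T} (S'' +_Y T'') is an isomorphism of spans of cospans from the cospan L +_Y R to the cospan L' +_Y R': θ_Y is an isomorphism in C, and composing θ_Y with the canonical leg (S' +_Y T') ×_{S +_Y T} (S'' +_Y T'') → L +_Y R (projection followed by the induced map S' +_Y T' → L +_Y R) equals the canonical leg (S' ×_S S'') +_Y (T' ×_T T'') → L +_Y R, and similarly for the legs to L' +_Y R'. -/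
open CategoryTheory CategoryTheory.Limits

universe v u

/-!
In a topos the singleton map `K ⟶ Ω^K` classifies partial maps into `K`, so a pushout of a
monomorphism is a monomorphism and the pushout square is also a pullback. Consequently the
comparison maps `S' +_Y T' ⟶ S +_Y T` and `S'' +_Y T'' ⟶ S +_Y T` are monomorphisms which restrict
over `S` to `S'`, `S''` and over `T` to `T'`, `T''`. Both the source and the target of `θ_Y` are
thereby subobjects of `M = S +_Y T`, with the source contained in the target via `θ_Y`. Over `S`
the target restricts to `S' ∩ S''`, which lies in the source, and likewise over `T`. Since
subobjects of `M` are maps `M ⟶ Ω`, which are determined by their restrictions to `S` and `T`,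
the two subobjects coincide and `θ_Y` is an isomorphism.
-/

attribute [local simp] prod.lift_fst prod.lift_snd prod.lift_fst_assoc prod.lift_snd_assoc
  pullback.lift_fst pullback.lift_snd pullback.lift_fst_assoc pullback.lift_snd_assoc
  pushout.inl_desc pushout.inr_desc pushout.inl_desc_assoc pushout.inr_desc_assoc

namespace CategoryTheory

variable {C : Type u} [Category.{v} C]

theorem IsPullback.of_exists_lift {P X Y Z : C} {fst : P ⟶ X} {snd : P ⟶ Y} {f : X ⟶ Z}
    {g : Y ⟶ Z} [Mono fst] (w : fst ≫ f = snd ≫ g)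
    (h : ∀ {W : C} (u : W ⟶ X) (v : W ⟶ Y), u ≫ f = v ≫ g →
      ∃ l : W ⟶ P, l ≫ fst = u ∧ l ≫ snd = v) :
    IsPullback fst snd f g :=
  IsPullback.of_isLimit <| PullbackCone.IsLimit.mk w
    (fun s => (h s.fst s.snd s.condition).choose)
    (fun s => (h s.fst s.snd s.condition).choose_spec.1)
    (fun s => (h s.fst s.snd s.condition).choose_spec.2)
    (fun s m h₁ _ => by rw [← cancel_mono fst, h₁, (h s.fst s.snd s.condition).choose_spec.1])

theorem IsPullback.prodLift_prodMap [HasBinaryProducts C] {D D' W W' K : C} {d : D ⟶ W}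
    {d' : D' ⟶ W'} {g : W' ⟶ W} {g' : D' ⟶ D} [Mono d'] (h : IsPullback d' g' g d)
    (f : D ⟶ K) :
    IsPullback (prod.lift (g' ≫ f) d') g' (prod.map (𝟙 K) g) (prod.lift f d) := by
  refine .of_exists_lift (by ext <;> simp [h.w]) fun u v huv => ?_
  have h₁ : u ≫ prod.fst = v ≫ f := by simpa using huv =≫ prod.fst
  have h₂ : (u ≫ prod.snd) ≫ g = v ≫ d := by simpa using huv =≫ prod.snd
  refine ⟨h.lift _ _ h₂, ?_, h.lift_snd _ _ _⟩
  ext <;> simp [h₁]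

theorem isPushout_pushoutMap_inl [HasPushouts C] {Y U₁ U₂ V : C} {f₁ : Y ⟶ U₁} {f₂ : Y ⟶ U₂}
    (g : Y ⟶ V) (m : U₁ ⟶ U₂) (hf : f₁ ≫ m = f₂) :
    IsPushout m (pushout.inl f₁ g) (pushout.inl f₂ g)
      (pushout.map f₁ g f₂ g m (𝟙 V) (𝟙 Y) (by simp [hf]) (by simp)) :=
  IsPushout.of_left (by simpa [hf] using IsPushout.of_hasPushout f₂ g) (by simp)
    (IsPushout.of_hasPushout f₁ g)

theorem isPushout_pushoutMap_inr [HasPushouts C] {Y U V₁ V₂ : C} (f : Y ⟶ U) {g₁ : Y ⟶ V₁}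
    {g₂ : Y ⟶ V₂} (m : V₁ ⟶ V₂) (hg : g₁ ≫ m = g₂) :
    IsPushout m (pushout.inr f g₁) (pushout.inr f g₂)
      (pushout.map f g₁ f g₂ (𝟙 U) m (𝟙 Y) (by simp) (by simp [hg])) :=
  IsPushout.of_left (by simpa [hg] using (IsPushout.of_hasPushout f g₂).flip) (by simp)
    (IsPushout.of_hasPushout f g₁).flip

theorem Subobject.pullback_obj_mk_pullback_fst_le [HasPullbacks C] {M P Q S S₁ S₂ A : C}
    {p : P ⟶ M} {q : Q ⟶ M} [Mono p] [Mono q] {s : S ⟶ M} {i₁ : S₁ ⟶ S} {i₂ : S₂ ⟶ S}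
    {p₁ : S₁ ⟶ P} {q₂ : S₂ ⟶ Q} (hP : IsPullback p₁ i₁ p s) (hQ : IsPullback q₂ i₂ q s)
    {a : A ⟶ M} [Mono a] (e : Limits.pullback i₁ i₂ ⟶ A)
    (he : e ≫ a = pullback.fst i₁ i₂ ≫ p₁ ≫ p) :
    (Subobject.pullback s).obj (mk (pullback.fst p q ≫ p)) ≤ (Subobject.pullback s).obj (mk a) := by
  rw [pullback_obj_mk (IsPullback.of_hasPullback _ s),
    pullback_obj_mk (IsPullback.of_hasPullback a s)]
  let π := pullback.fst (pullback.fst p q ≫ p) s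
  let σ := pullback.snd (pullback.fst p q ≫ p) s
  have wP : (π ≫ pullback.fst p q) ≫ p = σ ≫ s := by simpa using pullback.condition
  have wQ : (π ≫ pullback.snd p q) ≫ q = σ ≫ s := by simpa [← pullback.condition] using wP
  let k : _ ⟶ Limits.pullback i₁ i₂ := pullback.lift (hP.lift _ _ wP) (hQ.lift _ _ wQ) (by simp)
  refine mk_le_mk_of_comm (pullback.lift (k ≫ e) σ ?_) (pullback.lift_snd _ _ _)
  simp [he, k, wP]

namespace Subobject.Classifier

theorem comp_χ_of_isPullback (𝒞 : Classifier C) {U U' X X' : C} {m : U ⟶ X} {m' : U' ⟶ X'}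
    [Mono m] [Mono m'] {f : U' ⟶ U} {g : X' ⟶ X} (h : IsPullback m' f g m) :
    g ≫ 𝒞.χ m = 𝒞.χ m' :=
  𝒞.uniq m' (h.paste_vert (𝒞.isPullback m))

theorem exists_comp_eq_of_χ_eq (𝒞 : Classifier C) {U V X : C} {m : U ⟶ X} {n : V ⟶ X}
    [Mono m] [Mono n] (h : 𝒞.χ m = 𝒞.χ n) : ∃ φ : U ⟶ V, φ ≫ n = m := by
  have hn : IsPullback n (𝒞.χ₀ V) (𝒞.χ m) 𝒞.truth := h ▸ 𝒞.isPullback n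
  exact ⟨hn.lift m (𝒞.χ₀ U) (𝒞.isPullback m).w, hn.lift_fst _ _ _⟩

theorem subobject_eq_of_isPushout [HasPullbacks C] (𝒞 : Classifier C) {W X₁ X₂ M : C}
    {f₁ : W ⟶ X₁} {f₂ : W ⟶ X₂} {i₁ : X₁ ⟶ M} {i₂ : X₂ ⟶ M} (h : IsPushout f₁ f₂ i₁ i₂)
    {A B : Subobject M} (h₁ : (Subobject.pullback i₁).obj A = (Subobject.pullback i₁).obj B)
    (h₂ : (Subobject.pullback i₂).obj A = (Subobject.pullback i₂).obj B) : A = B := by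
  let e := 𝒞.representableBy
  obtain ⟨a, rfl⟩ := e.homEquiv.surjective A
  obtain ⟨b, rfl⟩ := e.homEquiv.surjective B
  congr 1
  apply h.hom_ext <;> apply e.homEquiv.injective <;> rw [e.homEquiv_comp, e.homEquiv_comp]
  exacts [h₁, h₂]

section PowerObject

variable [HasFiniteLimits C] (𝒞 : Classifier C) (K : C) [(prod.functor.obj K).IsLeftAdjoint]

noncomputable def powerObj : C := (prod.functor.obj K).rightAdjoint.obj 𝒞.Ω

variable {K}

/-- Stated with `K ⨯ W` rather than `(prod.functor.obj K).obj W`, which agrees with it only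
after unfolding. -/
noncomputable def curry {W : C} (φ : K ⨯ W ⟶ 𝒞.Ω) : W ⟶ 𝒞.powerObj K :=
  (Adjunction.ofIsLeftAdjoint (prod.functor.obj K)).homEquiv W 𝒞.Ω φ

theorem comp_curry {W W' : C} (g : W' ⟶ W) (φ : K ⨯ W ⟶ 𝒞.Ω) :
    g ≫ 𝒞.curry φ = 𝒞.curry (prod.map (𝟙 K) g ≫ φ) :=
  ((Adjunction.ofIsLeftAdjoint (prod.functor.obj K)).homEquiv_naturality_left g φ).symm

theorem curry_injective {W : C} : Function.Injective (𝒞.curry (K := K) (W := W)) :=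
  ((Adjunction.ofIsLeftAdjoint (prod.functor.obj K)).homEquiv W 𝒞.Ω).injective

noncomputable def classifyPartial {D W : C} (f : D ⟶ K) (d : D ⟶ W) [Mono d] :
    W ⟶ 𝒞.powerObj K :=
  𝒞.curry (𝒞.χ (prod.lift f d))

variable (K) in
noncomputable def singleton : K ⟶ 𝒞.powerObj K := 𝒞.classifyPartial (𝟙 K) (𝟙 K)

theorem comp_classifyPartial {D D' W W' : C} {d : D ⟶ W} {d' : D' ⟶ W'} [Mono d] [Mono d']
    {g : W' ⟶ W} {g' : D' ⟶ D} (h : IsPullback d' g' g d) (f : D ⟶ K) :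
    g ≫ 𝒞.classifyPartial f d = 𝒞.classifyPartial (g' ≫ f) d' := by
  rw [classifyPartial, classifyPartial, comp_curry,
    𝒞.comp_χ_of_isPullback (h.prodLift_prodMap f)]

theorem comp_singleton {V : C} (β : V ⟶ K) :
    β ≫ 𝒞.singleton K = 𝒞.classifyPartial β (𝟙 V) := by
  rw [singleton]
  simpa using 𝒞.comp_classifyPartial (IsPullback.id_horiz β) (𝟙 K)

theorem classifyPartial_injective {V : C} {α β : V ⟶ K}
    (h : 𝒞.classifyPartial α (𝟙 V) = 𝒞.classifyPartial β (𝟙 V)) : α = β := by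
  unfold classifyPartial at h
  obtain ⟨φ, hφ⟩ := 𝒞.exists_comp_eq_of_χ_eq (𝒞.curry_injective h.symm)
  have hφ₂ : φ = 𝟙 V := by simpa using hφ =≫ prod.snd
  simpa [hφ₂] using hφ =≫ prod.fst

instance mono_singleton : Mono (𝒞.singleton K) :=
  ⟨fun α β h => 𝒞.classifyPartial_injective (by rwa [← comp_singleton, ← comp_singleton])⟩

theorem isPullback_classifyPartial {D W : C} (f : D ⟶ K) (d : D ⟶ W) [Mono d] :
    IsPullback d f (𝒞.classifyPartial f d) (𝒞.singleton K) := by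
  have hd := 𝒞.comp_classifyPartial ((mono_iff_isPullback d).1 ‹_›) f
  refine .of_exists_lift (by rw [hd, comp_singleton, Category.id_comp]) fun {V} α β h => ?_
  rw [𝒞.comp_classifyPartial (IsPullback.of_hasPullback d α).flip, comp_singleton,
    classifyPartial, classifyPartial] at h
  obtain ⟨φ, hφ⟩ := 𝒞.exists_comp_eq_of_χ_eq (𝒞.curry_injective h).symm
  have hφ₁ : φ ≫ pullback.fst d α ≫ f = β := by simpa using hφ =≫ prod.fst
  have hφ₂ : φ ≫ pullback.snd d α = 𝟙 V := by simpa using hφ =≫ prod.snd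
  refine ⟨φ ≫ pullback.fst d α, ?_, by simpa using hφ₁⟩
  rw [Category.assoc, pullback.condition, ← Category.assoc, hφ₂, Category.id_comp]

end PowerObject

section PushoutOfMono

variable [HasFiniteLimits C] {G H K W : C} {n : G ⟶ H} {k : G ⟶ K}
  {iH : H ⟶ W} {iK : K ⟶ W} [(prod.functor.obj K).IsLeftAdjoint] [Mono n]

/-- The partial map `(n, k)` is a pullback of the singleton map along its classifying map, and
that classifying map extends along the pushout. -/
theorem isPullback_of_isPushout_of_mono_left (𝒞 : Classifier C) (hp : IsPushout n k iH iK) :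
    IsPullback n k iH iK := by
  have hk := 𝒞.isPullback_classifyPartial k n
  refine .of_exists_lift hp.w fun u v huv => hk.exists_lift u v ?_
  simpa only [Category.assoc, hp.inl_desc, hp.inr_desc] using huv =≫ hp.desc _ _ hk.w

theorem mono_of_isPushout_of_mono_left (𝒞 : Classifier C) (hp : IsPushout n k iH iK) : Mono iK :=
  mono_of_mono_fac (hp.inr_desc _ _ (𝒞.isPullback_classifyPartial k n).w)

end PushoutOfMono

end Subobject.Classifier

end CategoryTheory

namespace IsTopos

variable (C : Type u) [Category.{v} C] [IsTopos C]

noncomputable def classifier : Subobject.Classifier C :=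
  have h := (IsTopos.hasSubobjectClassifier (C := C)).exists_classifier
  Subobject.Classifier.mkOfTerminalΩ₀ (⊤_ C) terminalIsTerminal h.choose h.choose_spec.choose
    (fun m _ => (h.choose_spec.choose_spec m inferInstance).choose)
    (fun m _ => (h.choose_spec.choose_spec m inferInstance).choose_spec.1)
    (fun m _ χ' hχ' => (h.choose_spec.choose_spec m inferInstance).choose_spec.2 χ' hχ')

instance (K : C) : (prod.functor.obj K).IsLeftAdjoint := IsTopos.cartesianClosed K

variable {C} [HasFiniteColimits C]

theorem mono_isPullback_of_pushout_comparison {Y U₁ U₂ V₁ V₂ : C} {f₁ : Y ⟶ U₁} {g₁ : Y ⟶ V₁}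
    {f₂ : Y ⟶ U₂} {g₂ : Y ⟶ V₂} (mU : U₁ ⟶ U₂) (mV : V₁ ⟶ V₂) [Mono mU] [Mono mV]
    (hf : f₁ ≫ mU = f₂) (hg : g₁ ≫ mV = g₂) (c : pushout f₁ g₁ ⟶ pushout f₂ g₂)
    (hc₁ : pushout.inl f₁ g₁ ≫ c = mU ≫ pushout.inl f₂ g₂)
    (hc₂ : pushout.inr f₁ g₁ ≫ c = mV ≫ pushout.inr f₂ g₂) :
    Mono c ∧ IsPullback (pushout.inl f₁ g₁) mU c (pushout.inl f₂ g₂) ∧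
      IsPullback (pushout.inr f₁ g₁) mV c (pushout.inr f₂ g₂) := by
  let 𝒞 := classifier C
  let c₁ := pushout.map f₁ g₁ f₂ g₁ mU (𝟙 V₁) (𝟙 Y) (by simp [hf]) (by simp)
  let c₂ := pushout.map f₂ g₁ f₂ g₂ (𝟙 U₂) mV (𝟙 Y) (by simp) (by simp [hg])
  have H₁ : IsPushout mU _ _ c₁ := isPushout_pushoutMap_inl g₁ mU hf
  have H₂ : IsPushout mV _ _ c₂ := isPushout_pushoutMap_inr f₂ mV hg
  have := 𝒞.mono_of_isPushout_of_mono_left H₁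
  have := 𝒞.mono_of_isPushout_of_mono_left H₂
  obtain rfl : c = c₁ ≫ c₂ := by ext <;> simp [c₁, c₂, hc₁, hc₂]
  have P₁ : IsPullback (pushout.inr f₁ g₁) (𝟙 V₁) c₁ (pushout.inr f₂ g₁) :=
    .of_vert_isIso_mono ⟨by simp [c₁]⟩
  have P₂ : IsPullback (pushout.inl f₂ g₁) (𝟙 U₂) c₂ (pushout.inl f₂ g₂) :=
    .of_vert_isIso_mono ⟨by simp [c₂]⟩
  refine ⟨inferInstance, ?_, ?_⟩
  · simpa using (𝒞.isPullback_of_isPushout_of_mono_left H₁).flip.paste_vert P₂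
  · simpa using P₁.paste_vert (𝒞.isPullback_of_isPushout_of_mono_left H₂).flip

theorem isIso_of_comp_pullback_fst_eq {Y S S₁ S₂ T T₁ T₂ : C} {s : Y ⟶ S} {s₁ : Y ⟶ S₁}
    {s₂ : Y ⟶ S₂} {t : Y ⟶ T} {t₁ : Y ⟶ T₁} {t₂ : Y ⟶ T₂} {i₁ : S₁ ⟶ S} {i₂ : S₂ ⟶ S}
    {j₁ : T₁ ⟶ T} {j₂ : T₂ ⟶ T} [Mono i₁] [Mono i₂] [Mono j₁] [Mono j₂]
    (hs₁ : s₁ ≫ i₁ = s) (hs₂ : s₂ ≫ i₂ = s) (ht₁ : t₁ ≫ j₁ = t) (ht₂ : t₂ ≫ j₂ = t)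
    {p : pushout s₁ t₁ ⟶ pushout s t} (hp₁ : pushout.inl s₁ t₁ ≫ p = i₁ ≫ pushout.inl s t)
    (hp₂ : pushout.inr s₁ t₁ ≫ p = j₁ ≫ pushout.inr s t)
    {q : pushout s₂ t₂ ⟶ pushout s t} (hq₁ : pushout.inl s₂ t₂ ≫ q = i₂ ≫ pushout.inl s t)
    (hq₂ : pushout.inr s₂ t₂ ≫ q = j₂ ≫ pushout.inr s t)
    {θ : pushout (pullback.lift s₁ s₂ (hs₁.trans hs₂.symm))
      (pullback.lift t₁ t₂ (ht₁.trans ht₂.symm)) ⟶ pullback p q}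
    (hθ₁ : pushout.inl _ _ ≫ θ ≫ pullback.fst p q = pullback.fst i₁ i₂ ≫ pushout.inl s₁ t₁)
    (hθ₂ : pushout.inr _ _ ≫ θ ≫ pullback.fst p q = pullback.fst j₁ j₂ ≫ pushout.inr s₁ t₁) :
    IsIso θ := by
  obtain ⟨_, hp₁, hp₂⟩ := mono_isPullback_of_pushout_comparison i₁ j₁ hs₁ ht₁ p hp₁ hp₂
  obtain ⟨_, hq₁, hq₂⟩ := mono_isPullback_of_pushout_comparison i₂ j₂ hs₂ ht₂ q hq₁ hq₂
  obtain ⟨_, -, -⟩ := mono_isPullback_of_pushout_comparison (pullback.fst i₁ i₂)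
    (pullback.fst j₁ j₂) (pullback.lift_fst _ _ _) (pullback.lift_fst _ _ _) _ hθ₁ hθ₂
  have := mono_of_mono θ (pullback.fst p q)
  have key : Subobject.mk (θ ≫ pullback.fst p q ≫ p) = Subobject.mk (pullback.fst p q ≫ p) := by
    apply (classifier C).subobject_eq_of_isPushout (IsPushout.of_hasPushout s t) <;>
      refine le_antisymm ((Subobject.pullback _).monotone (Subobject.mk_le_mk_of_comm θ rfl)) ?_
    · exact Subobject.pullback_obj_mk_pullback_fst_le hp₁ hq₁ (pushout.inl _ _)
        (by rw [reassoc_of% hθ₁])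
    · exact Subobject.pullback_obj_mk_pullback_fst_le hp₂ hq₂ (pushout.inr _ _)
        (by rw [reassoc_of% hθ₂])
  have hθ : (Subobject.isoOfMkEqMk _ _ key).hom = θ := by
    rw [← cancel_mono (pullback.fst p q ≫ p), Subobject.isoOfMkEqMk_hom, Subobject.ofMkLEMk_comp]
  exact hθ ▸ inferInstance

end IsTopos

theorem stmt10 {𝒞 : Type u} [Category.{v} 𝒞] [IsTopos 𝒞] [HasFiniteColimits 𝒞]
    {Y L S L' R T R' S' S'' T' T'' : 𝒞}
    -- the cospans from `X` to `Y` and from `Y` to `Z`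
    (yL : Y ⟶ L) (yS : Y ⟶ S) (yL' : Y ⟶ L')
    (yR : Y ⟶ R) (yT : Y ⟶ T) (yR' : Y ⟶ R')
    -- the span of cospans `S'` from `L` to `S`, with monic span legs
    (yS' : Y ⟶ S') (lS' : S' ⟶ L) (dS' : S' ⟶ S) [Mono dS']
    (hS'2 : yS' ≫ lS' = yL)
    (hS'4 : yS' ≫ dS' = yS)
    -- the span of cospans `S''` from `S` to `L'`, with monic span legs
    (yS'' : Y ⟶ S'') (uS'' : S'' ⟶ S) (dS'' : S'' ⟶ L')
    [Mono uS'']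
    (hS''2 : yS'' ≫ uS'' = yS)
    (hS''4 : yS'' ≫ dS'' = yL')
    -- the span of cospans `T'` from `R` to `T`, with monic span legs
    (yT' : Y ⟶ T') (lT' : T' ⟶ R) (dT' : T' ⟶ T) [Mono dT']
    (hT'1 : yT' ≫ lT' = yR)
    (hT'3 : yT' ≫ dT' = yT)
    -- the span of cospans `T''` from `T` to `R'`, with monic span legs
    (yT'' : Y ⟶ T'') (uT'' : T'' ⟶ T) (dT'' : T'' ⟶ R')
    [Mono uT'']
    (hT''1 : yT'' ≫ uT'' = yT)
    (hT''3 : yT'' ≫ dT'' = yR')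
    -- `θ_Y : A_Y ⟶ B_Y` is the canonical morphism from
    -- `A_Y = (S' ×_S S'') +_Y (T' ×_T T'')` to `B_Y = (S' +_Y T') ×_{S +_Y T} (S'' +_Y T'')`
    (θY : pushout (pullback.lift yS' yS'' (hS'4.trans hS''2.symm))
                  (pullback.lift yT' yT'' (hT'3.trans hT''1.symm)) ⟶
          pullback
            (pushout.map yS' yT' yS yT dS' dT' (𝟙 Y)
              (by rw [hS'4, Category.id_comp]) (by rw [hT'3, Category.id_comp]))
            (pushout.map yS'' yT'' yS yT uS'' uT'' (𝟙 Y)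
              (by rw [hS''2, Category.id_comp]) (by rw [hT''1, Category.id_comp])))
    (hθY : θY = pushout.desc
      (pullback.lift
        (pullback.fst dS' uS'' ≫ pushout.inl yS' yT')
        (pullback.snd dS' uS'' ≫ pushout.inl yS'' yT'')
        (by simp only [pushout.map, Category.assoc]; rw [pushout.inl_desc, pushout.inl_desc]; exact pullback.condition_assoc _))
      (pullback.lift
        (pullback.fst dT' uT'' ≫ pushout.inr yS' yT')
        (pullback.snd dT' uT'' ≫ pushout.inr yS'' yT'')
        (by simp only [pushout.map, Category.assoc]; rw [pushout.inr_desc, pushout.inr_desc]; exact pullback.condition_assoc _))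
      (by apply pullback.hom_ext <;> simp only [Category.assoc] <;> first | (rw [pullback.lift_fst, pullback.lift_fst, pullback.lift_fst_assoc, pullback.lift_fst_assoc]; exact pushout.condition) | (rw [pullback.lift_snd, pullback.lift_snd, pullback.lift_snd_assoc, pullback.lift_snd_assoc]; exact pushout.condition))) :
    -- `θ_Y` is an isomorphism in `𝒞`, and it commutes with the span legs to `L +_Y R`
    -- and to `L' +_Y R'`
    IsIso θY ∧
    θY ≫ (pullback.fst _ _ ≫ pushout.map yS' yT' yL yR lS' lT' (𝟙 Y)
        (by rw [hS'2, Category.id_comp]) (by rw [hT'1, Category.id_comp])) =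
      pushout.map _ _ yL yR (pullback.fst dS' uS'' ≫ lS') (pullback.fst dT' uT'' ≫ lT') (𝟙 Y)
        (by rw [pullback.lift_fst_assoc, hS'2, Category.id_comp])
        (by rw [pullback.lift_fst_assoc, hT'1, Category.id_comp]) ∧
    θY ≫ (pullback.snd _ _ ≫ pushout.map yS'' yT'' yL' yR' dS'' dT'' (𝟙 Y)
        (by rw [hS''4, Category.id_comp]) (by rw [hT''3, Category.id_comp])) =
      pushout.map _ _ yL' yR' (pullback.snd dS' uS'' ≫ dS'') (pullback.snd dT' uT'' ≫ dT'') (𝟙 Y)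
        (by rw [pullback.lift_snd_assoc, hS''4, Category.id_comp])
        (by rw [pullback.lift_snd_assoc, hT''3, Category.id_comp]) := by
  subst hθY
  refine ⟨IsTopos.isIso_of_comp_pullback_fst_eq hS'4 hS''2 hT'3 hT''1
    (by simp) (by simp) (by simp) (by simp) (by simp) (by simp), ?_, ?_⟩ <;>
  ext <;> simp
end

section
/- In the category Set, let S', S'', T' be two-element sets and let S, Y, T, T'' be singleton sets. Then for every choice of functions s' : S' → S, s'' : S'' → S, t' : T' → T, t'' : T'' → T and y_{S'} : Y → S', y_{S''} : Y → S'', y_{T'} : Y → T', y_{T''} : Y → T'' (these are compatible since S and T are singletons), the set (S' ×_S S'') +_Y (T' ×_T T'') has exactly 5 elements while the set (S' +_Y T') ×_{S +_Y T} (S'' +_Y T'') has exactly 6 elements; in particular these two sets are not isomorphic, so the interchange isomorphism fails in Set when the span legs are not required to be monomorphisms. -/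
/-!
Every map out of the singleton `Y` is injective, and a pushout along an injective map
`g : X → C` is `B ⊔ (C ∖ g X)`, so `|B +_Y C| = |B| + |C| - 1`; a pullback over a singleton is
the product. Hence `(S' ×_S S'') +_Y (T' ×_T T'')` has `2·2 + 2·1 - 1 = 5` elements, whereas
`S +_Y T` is a point and `(S' +_Y T') ×_{S +_Y T} (S'' +_Y T'')` has `(2+2-1)·(2+1-1) = 6`.
-/

open CategoryTheory CategoryTheory.Limits

universe u

namespace CategoryTheory.Limits.Types

section PushoutOfInjective

variable {X B C : Type u} (f : X ⟶ B) {g : X ⟶ C}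

open Classical in
noncomputable def pushoutCoconeOfInjective (hg : Function.Injective g) : PushoutCocone f g :=
  PushoutCocone.mk (W := B ⊕ ↥(Set.range g)ᶜ) (TypeCat.ofHom Sum.inl)
    (TypeCat.ofHom fun c =>
      if h : c ∈ Set.range g then Sum.inl (f h.choose) else Sum.inr ⟨c, h⟩)
    (by
      ext x
      have hx : ∃ x', g x' = g x := ⟨x, rfl⟩
      simp [hx, hg hx.choose_spec])

open Classical in
noncomputable def isColimitPushoutCoconeOfInjective (hg : Function.Injective g) :
    IsColimit (pushoutCoconeOfInjective f hg) :=
  PushoutCocone.IsColimit.mk _ (fun s => TypeCat.ofHom (Sum.elim s.inl (fun c => s.inr c.1)))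
    (fun _ => rfl)
    (fun s => by
      ext c
      change Sum.elim s.inl (fun c : ↥(Set.range g)ᶜ => s.inr c.1)
        (if h : c ∈ Set.range g then Sum.inl (f h.choose) else Sum.inr ⟨c, h⟩) = s.inr c
      split_ifs with hc
      · exact (ConcreteCategory.congr_hom s.condition hc.choose).trans
          (congrArg s.inr hc.choose_spec)
      · rfl)
    (fun s m hl hr => by
      ext (b | ⟨c, hc⟩)
      · exact ConcreteCategory.congr_hom hl b
      · refine (congrArg m ?_).trans (ConcreteCategory.congr_hom hr c)
        change _ = if h : c ∈ Set.range g then _ else _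
        rw [dif_neg hc])

noncomputable def pushoutEquivSumComplRange (hg : Function.Injective g) :
    (pushout f g : Type u) ≃ B ⊕ ↥(Set.range g)ᶜ :=
  (colimit.isoColimitCocone ⟨_, isColimitPushoutCoconeOfInjective f hg⟩).toEquiv

theorem card_pushout_of_injective [Finite B] [Finite C] (hg : Function.Injective g) :
    Nat.card (pushout f g : Type u) = Nat.card B + Nat.card C - Nat.card X := by
  rw [Nat.card_congr (pushoutEquivSumComplRange f hg), Nat.card_sum, Nat.card_coe_set_eq,
    Set.ncard_compl, ← Nat.card_coe_set_eq, Nat.card_range_of_injective hg]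
  exact (Nat.add_sub_assoc (Nat.card_le_card_of_injective _ hg) _).symm

end PushoutOfInjective

instance finite_pullback {A B S : Type u} (f : A ⟶ S) (g : B ⟶ S) [Finite A] [Finite B] :
    Finite (pullback f g : Type u) :=
  Finite.of_equiv _ (pullbackIsoPullback f g).toEquiv.symm

theorem card_pullback_of_subsingleton {A B S : Type u} [Subsingleton S] (f : A ⟶ S)
    (g : B ⟶ S) : Nat.card (pullback f g : Type u) = Nat.card A * Nat.card B := by
  rw [Nat.card_congr ((pullbackIsoPullback f g).toEquiv.trans
    (Equiv.subtypeUnivEquiv fun _ => Subsingleton.elim _ _)), Nat.card_prod]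

end CategoryTheory.Limits.Types

/-- In the category `Set` (of types), if `S', S'', T'` are two-element
sets and `S, Y, T, T''` are singletons, then for every choice of functions between them
the set `(S' ×_S S'') +_Y (T' ×_T T'')` has exactly `5` elements while
`(S' +_Y T') ×_{S +_Y T} (S'' +_Y T'')` has exactly `6` elements; in particular the two
are not isomorphic, so the interchange isomorphism fails without monic span legs. -/
theorem stmt12 (S' S'' T' S Y T T'' : Type)
    (hS' : Nat.card S' = 2) (hS'' : Nat.card S'' = 2) (hT' : Nat.card T' = 2)
    (hS : Nat.card S = 1) (hY : Nat.card Y = 1) (hT : Nat.card T = 1)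
    (hT'' : Nat.card T'' = 1)
    (s' : S' ⟶ S) (s'' : S'' ⟶ S) (t' : T' ⟶ T) (t'' : T'' ⟶ T)
    (yS' : Y ⟶ S') (yS'' : Y ⟶ S'') (yT' : Y ⟶ T') (yT'' : Y ⟶ T'') :
    Nat.card (pushout
      (pullback.lift (f := s') (g := s'') yS' yS''
        (by haveI := (Nat.card_eq_one_iff_unique.mp hS).1; ext y;
            exact Subsingleton.elim _ _))
      (pullback.lift (f := t') (g := t'') yT' yT''
        (by haveI := (Nat.card_eq_one_iff_unique.mp hT).1; ext y;
            exact Subsingleton.elim _ _))) = 5 ∧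
    Nat.card (pullback
      (pushout.map yS' yT' (yS' ≫ s') (yT' ≫ t') s' t' (𝟙 Y)
        (by haveI := (Nat.card_eq_one_iff_unique.mp hS).1; ext y;
            exact Subsingleton.elim _ _)
        (by haveI := (Nat.card_eq_one_iff_unique.mp hT).1; ext y;
            exact Subsingleton.elim _ _))
      (pushout.map yS'' yT'' (yS' ≫ s') (yT' ≫ t') s'' t'' (𝟙 Y)
        (by haveI := (Nat.card_eq_one_iff_unique.mp hS).1; ext y;
            exact Subsingleton.elim _ _)
        (by haveI := (Nat.card_eq_one_iff_unique.mp hT).1; ext y;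
            exact Subsingleton.elim _ _))) = 6 ∧
    IsEmpty ((pushout
      (pullback.lift (f := s') (g := s'') yS' yS''
        (by haveI := (Nat.card_eq_one_iff_unique.mp hS).1; ext y;
            exact Subsingleton.elim _ _))
      (pullback.lift (f := t') (g := t'') yT' yT''
        (by haveI := (Nat.card_eq_one_iff_unique.mp hT).1; ext y;
            exact Subsingleton.elim _ _))) ≅
    (pullback
      (pushout.map yS' yT' (yS' ≫ s') (yT' ≫ t') s' t' (𝟙 Y)
        (by haveI := (Nat.card_eq_one_iff_unique.mp hS).1; ext y;
            exact Subsingleton.elim _ _)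
        (by haveI := (Nat.card_eq_one_iff_unique.mp hT).1; ext y;
            exact Subsingleton.elim _ _))
      (pushout.map yS'' yT'' (yS' ≫ s') (yT' ≫ t') s'' t'' (𝟙 Y)
        (by haveI := (Nat.card_eq_one_iff_unique.mp hS).1; ext y;
            exact Subsingleton.elim _ _)
        (by haveI := (Nat.card_eq_one_iff_unique.mp hT).1; ext y;
            exact Subsingleton.elim _ _)))) := by
  have : Subsingleton Y := (Nat.card_eq_one_iff_unique.mp hY).1
  have : Subsingleton S := (Nat.card_eq_one_iff_unique.mp hS).1
  have : Subsingleton T := (Nat.card_eq_one_iff_unique.mp hT).1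
  have : Finite S' := Nat.finite_of_card_ne_zero (by omega)
  have : Finite S'' := Nat.finite_of_card_ne_zero (by omega)
  have : Finite T' := Nat.finite_of_card_ne_zero (by omega)
  have : Finite T'' := Nat.finite_of_card_ne_zero (by omega)
  have : Finite S := Nat.finite_of_card_ne_zero (by omega)
  have : Finite T := Nat.finite_of_card_ne_zero (by omega)
  have inj {Z : Type} (k : Y ⟶ Z) : Function.Injective k := Function.injective_of_subsingleton _
  have : Subsingleton (pushout (yS' ≫ s') (yT' ≫ t') : Type) := by
    refine (Nat.card_eq_one_iff_unique.mp ?_).1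
    rw [Types.card_pushout_of_injective _ (inj _), hS, hT, hY]
  refine ⟨?_, ?_, ⟨fun e => absurd (Nat.card_congr e.toEquiv) ?_⟩⟩ <;>
    simp [Types.card_pushout_of_injective _ (inj _), Types.card_pullback_of_subsingleton, hS', hS'',
      hT', hT'', hY]
end
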